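/- Let (A, B) be a pairing of regular multiplier Hopf algebras and form the smash product B # A using the left action a ▷ b = Σ ⟨a, b₍₂₎⟩ b₍₁₎ of A on the A-module algebra B. Then B is a left (B # A)-module via (b # a)b' = b(a ▷ b'), and this action is faithful: if z ∈ B # A satisfies z·b' = 0 for all b' ∈ B, then z = 0. -/

import Mathlib

/-! # A framework for (regular) multiplier Hopf algebras, following
Drabant–Van Daele–Zhang, "Actions of Multiplier Hopf Algebras".

Algebras are (possibly non-unital) associative algebras over `ℂ` with
non-degenerate product.  A multiplier of such an algebra (whose multiplication
is recorded as a bilinear map `mul`) is a pair `(L, R)` of linear maps with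
`L (x*y) = L x * y`, `R (x*y) = x * R y` and `x * L y = R x * y`; this is the
standard description of the multiplier algebra `M(A)`.

A regular multiplier Hopf algebra is recorded by the comultiplication
`Δ : A → M(A ⊗ A)` together with the four canonical maps
`T1 a b = Δ(a)(1 ⊗ b)`, `T2 a b = (a ⊗ 1)Δ(b)`, `T3 a b = Δ(a)(b ⊗ 1)`,
`T4 a b = (1 ⊗ a)Δ(b)` (all with values in `A ⊗ A`), which are required to be
bijective as maps of `A ⊗ A`; together with the counit and the (bijective)
antipode satisfying the usual axioms, expressed in covered (Sweedler) form. -/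

open scoped TensorProduct
open TensorProduct LinearMap

noncomputable section

/-! ## Multipliers -/

section MulPair

variable {X : Type*} [AddCommGroup X] [Module ℂ X]

/-- A multiplier of the (possibly non-unital) algebra `(X, mul)`. -/
@[ext]
structure MulPair (mul : X →ₗ[ℂ] X →ₗ[ℂ] X) : Type _ where
  L : X →ₗ[ℂ] X
  R : X →ₗ[ℂ] X
  L_mul : ∀ x y : X, L (mul x y) = mul (L x) y
  R_mul : ∀ x y : X, R (mul x y) = mul x (R y)
  middle : ∀ x y : X, mul x (L y) = mul (R x) y

namespace MulPair

variable {mul : X →ₗ[ℂ] X →ₗ[ℂ] X}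

instance : One (MulPair mul) :=
  ⟨⟨LinearMap.id, LinearMap.id, fun _ _ => rfl, fun _ _ => rfl, fun _ _ => rfl⟩⟩

@[simp] theorem one_L : (1 : MulPair mul).L = LinearMap.id := rfl
@[simp] theorem one_R : (1 : MulPair mul).R = LinearMap.id := rfl

instance : Mul (MulPair mul) :=
  ⟨fun m n =>
    ⟨m.L ∘ₗ n.L, n.R ∘ₗ m.R,
      fun x y => by simp [n.L_mul, m.L_mul],
      fun x y => by simp [m.R_mul, n.R_mul],
      fun x y => by simp [m.middle, n.middle]⟩⟩

@[simp] theorem mul_L (m n : MulPair mul) : (m * n).L = m.L ∘ₗ n.L := rfl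
@[simp] theorem mul_R (m n : MulPair mul) : (m * n).R = n.R ∘ₗ m.R := rfl

instance : Zero (MulPair mul) :=
  ⟨⟨0, 0, fun x y => by simp, fun x y => by simp, fun x y => by simp⟩⟩

@[simp] theorem zero_L : (0 : MulPair mul).L = 0 := rfl
@[simp] theorem zero_R : (0 : MulPair mul).R = 0 := rfl

instance : Add (MulPair mul) :=
  ⟨fun m n =>
    ⟨m.L + n.L, m.R + n.R,
      fun x y => by simp [m.L_mul, n.L_mul],
      fun x y => by simp [m.R_mul, n.R_mul],
      fun x y => by simp [m.middle, n.middle]⟩⟩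

@[simp] theorem add_L (m n : MulPair mul) : (m + n).L = m.L + n.L := rfl
@[simp] theorem add_R (m n : MulPair mul) : (m + n).R = m.R + n.R := rfl

instance : Neg (MulPair mul) :=
  ⟨fun m =>
    ⟨-m.L, -m.R,
      fun x y => by simp [m.L_mul],
      fun x y => by simp [m.R_mul],
      fun x y => by simp [m.middle]⟩⟩

@[simp] theorem neg_L (m : MulPair mul) : (-m).L = -m.L := rfl
@[simp] theorem neg_R (m : MulPair mul) : (-m).R = -m.R := rfl

instance : Sub (MulPair mul) :=
  ⟨fun m n =>
    ⟨m.L - n.L, m.R - n.R,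
      fun x y => by simp [m.L_mul, n.L_mul, sub_eq_add_neg],
      fun x y => by simp [m.R_mul, n.R_mul, sub_eq_add_neg],
      fun x y => by simp [m.middle, n.middle, sub_eq_add_neg]⟩⟩

@[simp] theorem sub_L (m n : MulPair mul) : (m - n).L = m.L - n.L := rfl
@[simp] theorem sub_R (m n : MulPair mul) : (m - n).R = m.R - n.R := rfl

instance : SMul ℂ (MulPair mul) :=
  ⟨fun c m =>
    ⟨c • m.L, c • m.R,
      fun x y => by simp [m.L_mul],
      fun x y => by simp [m.R_mul],
      fun x y => by simp [m.middle]⟩⟩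

@[simp] theorem smul_L (c : ℂ) (m : MulPair mul) : (c • m).L = c • m.L := rfl
@[simp] theorem smul_R (c : ℂ) (m : MulPair mul) : (c • m).R = c • m.R := rfl

instance : SMul ℕ (MulPair mul) :=
  ⟨fun n m =>
    ⟨n • m.L, n • m.R,
      fun x y => by simp [m.L_mul],
      fun x y => by simp [m.R_mul],
      fun x y => by simp [m.middle]⟩⟩

@[simp] theorem nsmul_L (n : ℕ) (m : MulPair mul) : (n • m).L = n • m.L := rfl
@[simp] theorem nsmul_R (n : ℕ) (m : MulPair mul) : (n • m).R = n • m.R := rfl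

instance : SMul ℤ (MulPair mul) :=
  ⟨fun n m =>
    ⟨n • m.L, n • m.R,
      fun x y => by simp [m.L_mul],
      fun x y => by simp [m.R_mul],
      fun x y => by simp [m.middle]⟩⟩

@[simp] theorem zsmul_L (n : ℤ) (m : MulPair mul) : (n • m).L = n • m.L := rfl
@[simp] theorem zsmul_R (n : ℤ) (m : MulPair mul) : (n • m).R = n • m.R := rfl

/-- The underlying pair of linear maps. -/
def toProd (m : MulPair mul) : (X →ₗ[ℂ] X) × (X →ₗ[ℂ] X) := (m.L, m.R)

theorem toProd_injective : Function.Injective (toProd (mul := mul)) := by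
  intro m n h
  have h1 : m.L = n.L := congrArg Prod.fst h
  have h2 : m.R = n.R := congrArg Prod.snd h
  exact MulPair.ext h1 h2

instance : AddCommGroup (MulPair mul) :=
  toProd_injective.addCommGroup toProd rfl (fun _ _ => rfl) (fun _ => rfl)
    (fun _ _ => rfl) (fun _ _ => rfl) (fun _ _ => rfl)

/-- `toProd` as an additive monoid homomorphism. -/
def toProdHom : MulPair mul →+ (X →ₗ[ℂ] X) × (X →ₗ[ℂ] X) :=
  { toFun := toProd, map_zero' := rfl, map_add' := fun _ _ => rfl }

instance : Module ℂ (MulPair mul) :=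
  Function.Injective.module ℂ (toProdHom (mul := mul)) toProd_injective fun _ _ => rfl

theorem mul_add (m n k : MulPair mul) : m * (n + k) = m * n + m * k := by
  ext x <;> simp

theorem add_mul (m n k : MulPair mul) : (m + n) * k = m * k + n * k := by
  ext x <;> simp

theorem smul_mul (c : ℂ) (m n : MulPair mul) : (c • m) * n = c • (m * n) := by
  ext x <;> simp

theorem mul_smul (c : ℂ) (m n : MulPair mul) : m * (c • n) = c • (m * n) := by
  ext x <;> simp

theorem mul_assoc (m n k : MulPair mul) : m * n * k = m * (n * k) := by
  ext x <;> simp [LinearMap.comp_assoc]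

end MulPair

end MulPair

/-! ## Slice maps -/

section Slices

variable {X Y : Type*} [AddCommGroup X] [Module ℂ X] [AddCommGroup Y] [Module ℂ Y]

/-- Apply a functional to the second tensor leg: `(ι ⊗ φ)`. -/
def sliceR (φ : X →ₗ[ℂ] ℂ) : Y ⊗[ℂ] X →ₗ[ℂ] Y :=
  (TensorProduct.rid ℂ Y).toLinearMap ∘ₗ LinearMap.lTensor Y φ

/-- Apply a functional to the first tensor leg: `(φ ⊗ ι)`. -/
def sliceL (φ : X →ₗ[ℂ] ℂ) : X ⊗[ℂ] Y →ₗ[ℂ] Y :=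
  (TensorProduct.lid ℂ Y).toLinearMap ∘ₗ LinearMap.rTensor Y φ

@[simp] theorem sliceR_tmul (φ : X →ₗ[ℂ] ℂ) (y : Y) (x : X) :
    sliceR φ (y ⊗ₜ[ℂ] x) = φ x • y := by simp [sliceR]

@[simp] theorem sliceL_tmul (φ : X →ₗ[ℂ] ℂ) (x : X) (y : Y) :
    sliceL φ (x ⊗ₜ[ℂ] y) = φ x • y := by simp [sliceL]

end Slices

/-! ## Regular multiplier Hopf algebras -/

section RegMultHopf

variable (A : Type*) [NonUnitalRing A] [Module ℂ A] [SMulCommClass ℂ A A]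
  [IsScalarTower ℂ A A]

/-- The componentwise multiplication of `A ⊗ A`, as a bilinear map. -/
def tmulMul : (A ⊗[ℂ] A) →ₗ[ℂ] (A ⊗[ℂ] A) →ₗ[ℂ] (A ⊗[ℂ] A) :=
  TensorProduct.curry
    ((TensorProduct.map (LinearMap.mul' ℂ A) (LinearMap.mul' ℂ A)) ∘ₗ
      (TensorProduct.tensorTensorTensorComm ℂ A A A A).toLinearMap)

@[simp] theorem tmulMul_tmul (x y x' y' : A) :
    tmulMul A (x ⊗ₜ[ℂ] y) (x' ⊗ₜ[ℂ] y') = (x * x') ⊗ₜ[ℂ] (y * y') := by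
  simp [tmulMul]

variable {A}

/-- A regular multiplier Hopf algebra structure on the non-unital algebra `A`
(Van Daele; see Section 2 of the paper).  The product of `A` is required to be
non-degenerate; `Δ` is the comultiplication with values in the multiplier
algebra `M(A ⊗ A)`; `T1 a b = Δ(a)(1 ⊗ b)`, `T2 a b = (a ⊗ 1)Δ(b)`,
`T3 a b = Δ(a)(b ⊗ 1)` and `T4 a b = (1 ⊗ a)Δ(b)` are the canonical maps with
values in `A ⊗ A`, and the four lifted maps on `A ⊗ A` are bijective (the last
two bijectivity conditions express regularity).  `counit` and the bijective
antipode `S` satisfy the usual axioms in covered form. -/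
structure RegMultHopf : Type _ where
  nondegL : ∀ a : A, (∀ b : A, a * b = 0) → a = 0
  nondegR : ∀ a : A, (∀ b : A, b * a = 0) → a = 0
  Δ : A → MulPair (tmulMul A)
  Δ_add : ∀ a b : A, Δ (a + b) = Δ a + Δ b
  Δ_smul : ∀ (c : ℂ) (a : A), Δ (c • a) = c • Δ a
  Δ_mul : ∀ a b : A, Δ (a * b) = Δ a * Δ b
  T1 : A →ₗ[ℂ] A →ₗ[ℂ] A ⊗[ℂ] A
  T2 : A →ₗ[ℂ] A →ₗ[ℂ] A ⊗[ℂ] A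
  T3 : A →ₗ[ℂ] A →ₗ[ℂ] A ⊗[ℂ] A
  T4 : A →ₗ[ℂ] A →ₗ[ℂ] A ⊗[ℂ] A
  T1_spec : ∀ (a b : A) (u : A ⊗[ℂ] A),
    tmulMul A (T1 a b) u = (Δ a).L (LinearMap.lTensor A (LinearMap.mulLeft ℂ b) u)
  T2_spec : ∀ (a b : A) (u : A ⊗[ℂ] A),
    tmulMul A u (T2 a b) = (Δ b).R (LinearMap.rTensor A (LinearMap.mulRight ℂ a) u)
  T3_spec : ∀ (a b : A) (u : A ⊗[ℂ] A),
    tmulMul A (T3 a b) u = (Δ a).L (LinearMap.rTensor A (LinearMap.mulLeft ℂ b) u)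
  T4_spec : ∀ (a b : A) (u : A ⊗[ℂ] A),
    tmulMul A u (T4 a b) = (Δ b).R (LinearMap.lTensor A (LinearMap.mulRight ℂ a) u)
  T1_bij : Function.Bijective (TensorProduct.lift T1)
  T2_bij : Function.Bijective (TensorProduct.lift T2)
  T3_bij : Function.Bijective (TensorProduct.lift T3)
  T4_bij : Function.Bijective (TensorProduct.lift T4)
  coassoc : ∀ a b c : A,
    (TensorProduct.assoc ℂ A A A) (LinearMap.rTensor A (T2 a) (T1 b c)) =
      LinearMap.lTensor A (T1.flip c) (T2 a b)
  counit : A →ₗ[ℂ] ℂ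
  counit_mul : ∀ a b : A, counit (a * b) = counit a * counit b
  counit_T1 : ∀ a b : A, sliceL counit (T1 a b) = a * b
  counit_T2 : ∀ a b : A, sliceR counit (T2 a b) = a * b
  S : A →ₗ[ℂ] A
  Sinv : A →ₗ[ℂ] A
  S_Sinv : ∀ a : A, S (Sinv a) = a
  Sinv_S : ∀ a : A, Sinv (S a) = a
  S_mul : ∀ a b : A, S (a * b) = S b * S a
  S_T1 : ∀ a b : A,
    LinearMap.mul' ℂ A (LinearMap.rTensor A S (T1 a b)) = counit a • b
  S_T2 : ∀ a b : A,
    LinearMap.mul' ℂ A (LinearMap.lTensor A S (T2 a b)) = counit b • a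

/-- `φ` is a left integral on `(A, Δ)`: a non-zero functional with
`(ι ⊗ φ)Δ(a) = φ(a)1` in `M(A)`; evaluated against elements of `A` this
reads `(ι ⊗ φ)(Δ(a)(b ⊗ 1)) = φ(a)b` and `(ι ⊗ φ)((b ⊗ 1)Δ(a)) = φ(a)b`. -/
def IsLeftIntegral (H : RegMultHopf (A := A)) (φ : A →ₗ[ℂ] ℂ) : Prop :=
  φ ≠ 0 ∧ (∀ a b : A, sliceR φ (H.T3 a b) = φ a • b) ∧
    ∀ a b : A, sliceR φ (H.T2 b a) = φ a • b

end RegMultHopf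

/-! ## Module algebras and smash products -/

section ModAlg

variable {A : Type*} [NonUnitalRing A] [Module ℂ A] [SMulCommClass ℂ A A]
  [IsScalarTower ℂ A A]
variable {R : Type*} [AddCommGroup R] [Module ℂ R]

/-- The bilinear map `(p, q) ↦ (p ▷ x) ⬝ (q ▷ z)` used to express the module
algebra condition `a ▷ (x ⬝ y) = Σ (a₍₁₎ ▷ x) ⬝ (a₍₂₎ ▷ y)` in covered form. -/
def actPair (mulR : R →ₗ[ℂ] R →ₗ[ℂ] R) (act : A →ₗ[ℂ] R →ₗ[ℂ] R) (x z : R) :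
    A →ₗ[ℂ] A →ₗ[ℂ] R :=
  LinearMap.mk₂ ℂ (fun p q => mulR (act p x) (act q z))
    (fun p p' q => by simp)
    (fun c p q => by simp)
    (fun p q q' => by simp)
    (fun c p q => by simp)

/-- `R`, an algebra with multiplication `mulR` (associative, with
non-degenerate product), is a left `A`-module algebra for the unital action
`act`; the compatibility `a(xy) = Σ (a₍₁₎x)(a₍₂₎y)` is expressed in the
covered form `a ▷ (x ⬝ (b ▷ z)) = Σ (a₍₁₎ ▷ x) ⬝ ((a₍₂₎ b) ▷ z)` using
`T1 a b = Δ(a)(1 ⊗ b)`. -/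
structure IsModAlg (H : RegMultHopf (A := A)) (mulR : R →ₗ[ℂ] R →ₗ[ℂ] R)
    (act : A →ₗ[ℂ] R →ₗ[ℂ] R) : Prop where
  mul_assoc' : ∀ x y z : R, mulR (mulR x y) z = mulR x (mulR y z)
  mul_nondegL : ∀ x : R, (∀ y : R, mulR x y = 0) → x = 0
  mul_nondegR : ∀ x : R, (∀ y : R, mulR y x = 0) → x = 0
  act_act : ∀ (a b : A) (x : R), act (a * b) x = act a (act b x)
  unital : Submodule.span ℂ {y : R | ∃ a x, act a x = y} = ⊤
  compat : ∀ (a b : A) (x z : R),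
    act a (mulR x (act b z)) =
      TensorProduct.lift (actPair mulR act x z) (H.T1 a b)

/-- The bilinear map `(p, q) ↦ (x ⬝ (p ▷ x')) ⊗ q` describing the smash
product multiplication in covered form. -/
def smashPair (mulR : R →ₗ[ℂ] R →ₗ[ℂ] R) (act : A →ₗ[ℂ] R →ₗ[ℂ] R) (x x' : R) :
    A →ₗ[ℂ] A →ₗ[ℂ] R ⊗[ℂ] A :=
  LinearMap.mk₂ ℂ (fun p q => mulR x (act p x') ⊗ₜ[ℂ] q)
    (fun p p' q => by simp [add_tmul])
    (fun c p q => by simp [smul_tmul'])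
    (fun p q q' => by simp [tmul_add])
    (fun c p q => by simp [tmul_smul])

/-- The bilinear map `(p, q) ↦ p ▷ (f (q ▷ z))`, used to express in covered
form the extension of an action to the multiplier algebra `M(R)`:
`(a ▷ m)x = Σ a₍₁₎ ▷ (m (S(a₍₂₎) ▷ x))`. -/
def actSandwich (act : A →ₗ[ℂ] R →ₗ[ℂ] R) (f : R →ₗ[ℂ] R) (z : R) :
    A →ₗ[ℂ] A →ₗ[ℂ] R :=
  LinearMap.mk₂ ℂ (fun p q => act p (f (act q z)))
    (fun p p' q => by simp)
    (fun c p q => by simp)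
    (fun p q q' => by simp)
    (fun c p q => by simp)

/-- The bilinear map `(p, q) ↦ (x ⬝ γ(p)) ⊗ q` for a map `γ` into the
multiplier algebra `M(R)`. -/
def multTensorPair {mulR : R →ₗ[ℂ] R →ₗ[ℂ] R} (γ : A →ₗ[ℂ] MulPair mulR) (x : R) :
    A →ₗ[ℂ] A →ₗ[ℂ] R ⊗[ℂ] A :=
  LinearMap.mk₂ ℂ (fun p q => ((γ p).R x) ⊗ₜ[ℂ] q)
    (fun p p' q => by simp [add_tmul])
    (fun c p q => by simp [smul_tmul'])
    (fun p q q' => by simp [tmul_add])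
    (fun c p q => by simp [tmul_smul])

/-- `μ` is the multiplication of the smash product `R # A`:
`(x # a)(x' # a') = Σ x(a₍₁₎ ▷ x') # a₍₂₎a'`, expressed via
`T1 a a' = Δ(a)(1 ⊗ a') = Σ a₍₁₎ ⊗ a₍₂₎a'`. -/
def IsSmashMul (H : RegMultHopf (A := A)) (mulR : R →ₗ[ℂ] R →ₗ[ℂ] R)
    (act : A →ₗ[ℂ] R →ₗ[ℂ] R)
    (μ : (R ⊗[ℂ] A) →ₗ[ℂ] (R ⊗[ℂ] A) →ₗ[ℂ] (R ⊗[ℂ] A)) : Prop :=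
  ∀ (x x' : R) (a a' : A),
    μ (x ⊗ₜ[ℂ] a) (x' ⊗ₜ[ℂ] a') =
      TensorProduct.lift (smashPair mulR act x x') (H.T1 a a')

end ModAlg

/-! ## Dual pairs of regular multiplier Hopf algebras -/

section Pairing

variable {A B : Type*} [NonUnitalRing A] [Module ℂ A] [SMulCommClass ℂ A A]
  [IsScalarTower ℂ A A] [NonUnitalRing B] [Module ℂ B] [SMulCommClass ℂ B B]
  [IsScalarTower ℂ B B]

/-- A (non-degenerate) pairing of regular multiplier Hopf algebras in the
sense of Drabant–Van Daele.  `β` is the bilinear form; `lA a b = a ▷ b =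
Σ ⟨a, b₍₂₎⟩ b₍₁₎`, `lB b a = b ▷ a = Σ ⟨a₍₂₎, b⟩ a₍₁₎`, `rA a b = a ◁ b =
Σ ⟨a₍₁₎, b⟩ a₍₂₎`, `rB b a = b ◁ a = Σ ⟨a, b₍₁₎⟩ b₍₂₎` are the Sweedler leg
actions, tied to the comultiplications via the `..._leg` axioms and dual to
the multiplications via the `dual...` axioms; all four actions are unital
module actions. -/
structure MHAPairing (HA : RegMultHopf (A := A)) (HB : RegMultHopf (A := B)) :
    Type _ where
  β : A →ₗ[ℂ] B →ₗ[ℂ] ℂ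
  nondegA : ∀ a : A, (∀ b : B, β a b = 0) → a = 0
  nondegB : ∀ b : B, (∀ a : A, β a b = 0) → b = 0
  lA : A →ₗ[ℂ] B →ₗ[ℂ] B
  lB : B →ₗ[ℂ] A →ₗ[ℂ] A
  rA : A →ₗ[ℂ] B →ₗ[ℂ] A
  rB : B →ₗ[ℂ] A →ₗ[ℂ] B
  lA_leg : ∀ (a : A) (b c : B), sliceR (β a) (HB.T3 b c) = lA a b * c
  rB_leg : ∀ (a : A) (b c : B), sliceL (β a) (HB.T4 c b) = c * rB b a
  lB_leg : ∀ (b : B) (a c : A), sliceR (β.flip b) (HA.T3 a c) = lB b a * c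
  rA_leg : ∀ (b : B) (a c : A), sliceL (β.flip b) (HA.T4 c a) = c * rA a b
  dual1 : ∀ (a : A) (b b' : B), β a (b * b') = β (rA a b) b'
  dual2 : ∀ (a : A) (b b' : B), β a (b' * b) = β (lB b a) b'
  dual3 : ∀ (a a' : A) (b : B), β (a * a') b = β a' (rB b a)
  dual4 : ∀ (a a' : A) (b : B), β (a' * a) b = β a' (lA a b)
  lA_act : ∀ (a a' : A) (b : B), lA (a * a') b = lA a (lA a' b)
  lB_act : ∀ (b b' : B) (a : A), lB (b * b') a = lB b (lB b' a)
  rA_act : ∀ (a : A) (b b' : B), rA a (b * b') = rA (rA a b) b'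
  rB_act : ∀ (b : B) (a a' : A), rB b (a * a') = rB (rB b a) a'
  lA_unital : Submodule.span ℂ {y : B | ∃ a b, lA a b = y} = ⊤
  lB_unital : Submodule.span ℂ {y : A | ∃ b a, lB b a = y} = ⊤
  rA_unital : Submodule.span ℂ {y : A | ∃ a b, rA a b = y} = ⊤
  rB_unital : Submodule.span ℂ {y : B | ∃ b a, rB b a = y} = ⊤

end Pairing

/-! ## The dual action -/

section DualAction

variable {A B : Type*} [NonUnitalRing A] [Module ℂ A] [SMulCommClass ℂ A A]
  [IsScalarTower ℂ A A] [NonUnitalRing B] [Module ℂ B] [SMulCommClass ℂ B B]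
  [IsScalarTower ℂ B B]
variable {R : Type*} [AddCommGroup R] [Module ℂ R]
variable {HA : RegMultHopf (A := A)} {HB : RegMultHopf (A := B)}

/-- The dual action of `B` on the smash product `R # A`:
`b · (x # a) = x # (b ▷ a) = Σ ⟨a₍₂₎, b⟩ x # a₍₁₎`. -/
def dualAct (P : MHAPairing HA HB) : B →ₗ[ℂ] (R ⊗[ℂ] A) →ₗ[ℂ] R ⊗[ℂ] A :=
  (LinearMap.lTensorHom R) ∘ₗ P.lB

@[simp] theorem dualAct_tmul (P : MHAPairing HA HB) (b : B) (x : R) (a : A) :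
    dualAct P b (x ⊗ₜ[ℂ] a) = x ⊗ₜ[ℂ] P.lB b a := rfl

end DualAction

end

/-! ## Auxiliary lemmas for Proposition 6.2 -/

noncomputable section AuxFaithful

section SliceAux

variable {V W : Type*} [AddCommGroup V] [Module ℂ V] [AddCommGroup W] [Module ℂ W]

lemma sliceR_rTensor' (φ : W →ₗ[ℂ] ℂ) (f : V →ₗ[ℂ] V) (u : V ⊗[ℂ] W) :
    sliceR φ (LinearMap.rTensor W f u) = f (sliceR φ u) := by
  induction u using TensorProduct.induction_on with
  | zero => simp
  | tmul v w => simp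
  | add x y hx hy => simp [hx, hy]

lemma sliceL_lTensor' (φ : V →ₗ[ℂ] ℂ) (f : W →ₗ[ℂ] W) (u : V ⊗[ℂ] W) :
    sliceL φ (LinearMap.lTensor V f u) = f (sliceL φ u) := by
  induction u using TensorProduct.induction_on with
  | zero => simp
  | tmul v w => simp
  | add x y hx hy => simp [hx, hy]

lemma sliceL_rTensor' (φ : V →ₗ[ℂ] ℂ) (f : V →ₗ[ℂ] V) (u : V ⊗[ℂ] W) :
    sliceL φ (LinearMap.rTensor W f u) = sliceL (φ ∘ₗ f) u := by
  induction u using TensorProduct.induction_on with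
  | zero => simp
  | tmul v w => simp
  | add x y hx hy => simp [hx, hy]

lemma sliceR_all_zero {z : V ⊗[ℂ] W} (h : ∀ φ : W →ₗ[ℂ] ℂ, sliceR φ z = 0) : z = 0 := by
  classical
  set bV := Module.Basis.ofVectorSpace ℂ V
  set bW := Module.Basis.ofVectorSpace ℂ W
  set T := bV.tensorProduct bW with hT
  have key : ∀ i j, (T.repr z) (i, j) = bV.coord i (sliceR (bW.coord j) z) := by
    intro i j
    have heq : (Finsupp.lapply (i, j) : (_ →₀ ℂ) →ₗ[ℂ] ℂ) ∘ₗ T.repr.toLinearMap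
        = (bV.coord i) ∘ₗ (sliceR (bW.coord j)) := by
      apply T.ext
      rintro ⟨i', j'⟩
      simp only [LinearMap.comp_apply, LinearEquiv.coe_coe, Finsupp.lapply_apply,
        Module.Basis.repr_self, hT, Module.Basis.tensorProduct_apply, sliceR_tmul, map_smul,
        Module.Basis.coord_apply, Finsupp.single_apply, smul_eq_mul]
      by_cases h1 : i' = i <;> by_cases h2 : j' = j <;>
        simp [h1, h2, Prod.ext_iff]
    exact LinearMap.congr_fun heq z
  have hz : T.repr z = 0 := by
    ext p
    obtain ⟨i, j⟩ := p
    rw [key i j, h (bW.coord j)]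
    simp
  exact T.repr.map_eq_zero_iff.mp hz

lemma sliceL_all_zero {z : V ⊗[ℂ] W} (h : ∀ φ : V →ₗ[ℂ] ℂ, sliceL φ z = 0) : z = 0 := by
  have hc : ∀ (φ : V →ₗ[ℂ] ℂ) (u : V ⊗[ℂ] W),
      sliceR φ (TensorProduct.comm ℂ V W u) = sliceL φ u := by
    intro φ u
    induction u using TensorProduct.induction_on with
    | zero => simp
    | tmul v w => simp
    | add x y hx hy => simp [hx, hy]
  have h0 : (TensorProduct.comm ℂ V W) z = 0 :=
    sliceR_all_zero (fun φ => by rw [hc φ z, h φ])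
  simpa using (TensorProduct.comm ℂ V W).map_eq_zero_iff.mp h0

end SliceAux

section TmulMulAux

variable {A : Type*} [NonUnitalRing A] [Module ℂ A] [SMulCommClass ℂ A A]
  [IsScalarTower ℂ A A]

lemma tmulMul_tmul_right (v : A ⊗[ℂ] A) (p q : A) :
    tmulMul A v (p ⊗ₜ[ℂ] q)
      = LinearMap.lTensor A (LinearMap.mulRight ℂ q)
          (LinearMap.rTensor A (LinearMap.mulRight ℂ p) v) := by
  induction v using TensorProduct.induction_on with
  | zero => simp
  | tmul x y => simp
  | add x y hx hy => simp [hx, hy]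

lemma tmulMul_tmul_left (v : A ⊗[ℂ] A) (p q : A) :
    tmulMul A (p ⊗ₜ[ℂ] q) v
      = LinearMap.lTensor A (LinearMap.mulLeft ℂ q)
          (LinearMap.rTensor A (LinearMap.mulLeft ℂ p) v) := by
  induction v using TensorProduct.induction_on with
  | zero => simp
  | tmul x y => simp
  | add x y hx hy => simp [hx, hy]

lemma tmulMul_assoc (u v w : A ⊗[ℂ] A) :
    tmulMul A (tmulMul A u v) w = tmulMul A u (tmulMul A v w) := by
  induction u using TensorProduct.induction_on with
  | zero => simp
  | add x y hx hy => simp [hx, hy]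
  | tmul x y =>
    induction v using TensorProduct.induction_on with
    | zero => simp
    | add p q hp hq => simp [hp, hq]
    | tmul p q =>
      induction w using TensorProduct.induction_on with
      | zero => simp
      | add s t hs ht => simp at hs ht; simp [hs, ht]
      | tmul s t => simp [mul_assoc]

lemma tmulMul_lTensor_right (v t : A ⊗[ℂ] A) (b : A) :
    tmulMul A v (LinearMap.lTensor A (LinearMap.mulRight ℂ b) t)
      = LinearMap.lTensor A (LinearMap.mulRight ℂ b) (tmulMul A v t) := by
  induction v using TensorProduct.induction_on with
  | zero => simp
  | add x y hx hy => simp [hx, hy]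
  | tmul x y =>
    induction t using TensorProduct.induction_on with
    | zero => simp
    | add p q hp hq => simp [hp, hq]
    | tmul p q => simp [mul_assoc]

lemma tmulMul_lTensor_left (p q : A ⊗[ℂ] A) (b : A) :
    tmulMul A (LinearMap.lTensor A (LinearMap.mulRight ℂ b) p) q
      = tmulMul A p (LinearMap.lTensor A (LinearMap.mulLeft ℂ b) q) := by
  induction p using TensorProduct.induction_on with
  | zero => simp
  | add x y hx hy => simp [hx, hy]
  | tmul x y =>
    induction q using TensorProduct.induction_on with
    | zero => simp
    | add s t hs ht => simp at hs ht; simp [hs, ht]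
    | tmul s t => simp [mul_assoc]

lemma tmulMul_left_nondeg (nL : ∀ a : A, (∀ b : A, a * b = 0) → a = 0)
    {t : A ⊗[ℂ] A} (h : ∀ u, tmulMul A t u = 0) : t = 0 := by
  have h1 : ∀ b : A, LinearMap.rTensor A (LinearMap.mulRight ℂ b) t = 0 := by
    intro b
    apply sliceL_all_zero
    intro φ
    apply nL
    intro b'
    have := h (b ⊗ₜ[ℂ] b')
    rw [tmulMul_tmul_right] at this
    have h2 := congrArg (sliceL φ) this
    rw [sliceL_lTensor'] at h2
    simpa using h2
  apply sliceR_all_zero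
  intro ψ
  apply nL
  intro b
  have := congrArg (sliceR ψ) (h1 b)
  rw [sliceR_rTensor'] at this
  simpa using this

lemma tmulMul_right_nondeg (nR : ∀ a : A, (∀ b : A, b * a = 0) → a = 0)
    {t : A ⊗[ℂ] A} (h : ∀ u, tmulMul A u t = 0) : t = 0 := by
  have h1 : ∀ b : A, LinearMap.rTensor A (LinearMap.mulLeft ℂ b) t = 0 := by
    intro b
    apply sliceL_all_zero
    intro φ
    apply nR
    intro b'
    have := h (b ⊗ₜ[ℂ] b')
    rw [tmulMul_tmul_left] at this
    have h2 := congrArg (sliceL φ) this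
    rw [sliceL_lTensor'] at h2
    simpa using h2
  apply sliceR_all_zero
  intro ψ
  apply nR
  intro b
  have := congrArg (sliceR ψ) (h1 b)
  rw [sliceR_rTensor'] at this
  simpa using this

lemma tmulMul_left_cancel (nL : ∀ a : A, (∀ b : A, a * b = 0) → a = 0)
    {t t' : A ⊗[ℂ] A} (h : ∀ u, tmulMul A t u = tmulMul A t' u) : t = t' := by
  have : t - t' = 0 := by
    apply tmulMul_left_nondeg nL
    intro u
    rw [map_sub, LinearMap.sub_apply, h u, sub_self]
  exact sub_eq_zero.mp this

lemma tmulMul_right_cancel (nR : ∀ a : A, (∀ b : A, b * a = 0) → a = 0)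
    {t t' : A ⊗[ℂ] A} (h : ∀ u, tmulMul A u t = tmulMul A u t') : t = t' := by
  have : t - t' = 0 := by
    apply tmulMul_right_nondeg nR
    intro u
    rw [map_sub, h u, sub_self]
  exact sub_eq_zero.mp this

lemma key2 (HA : RegMultHopf (A := A)) (a b : A) (v : A ⊗[ℂ] A) :
    tmulMul A v (HA.T1 a b)
      = LinearMap.lTensor A (LinearMap.mulRight ℂ b) ((HA.Δ a).R v) := by
  apply tmulMul_left_cancel HA.nondegL
  intro u
  calc tmulMul A (tmulMul A v (HA.T1 a b)) u
      = tmulMul A v (tmulMul A (HA.T1 a b) u) := tmulMul_assoc _ _ _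
    _ = tmulMul A v ((HA.Δ a).L (LinearMap.lTensor A (LinearMap.mulLeft ℂ b) u)) := by
        rw [HA.T1_spec]
    _ = tmulMul A ((HA.Δ a).R v) (LinearMap.lTensor A (LinearMap.mulLeft ℂ b) u) :=
        (HA.Δ a).middle _ _
    _ = tmulMul A (LinearMap.lTensor A (LinearMap.mulRight ℂ b) ((HA.Δ a).R v)) u :=
        (tmulMul_lTensor_left _ _ _).symm

lemma key (HA : RegMultHopf (A := A)) (a b c d : A) :
    LinearMap.lTensor A (LinearMap.mulRight ℂ b) (HA.T4 d (c * a))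
      = tmulMul A (HA.T4 d c) (HA.T1 a b) := by
  apply tmulMul_right_cancel HA.nondegR
  intro v
  calc tmulMul A v (LinearMap.lTensor A (LinearMap.mulRight ℂ b) (HA.T4 d (c * a)))
      = LinearMap.lTensor A (LinearMap.mulRight ℂ b) (tmulMul A v (HA.T4 d (c * a))) :=
        tmulMul_lTensor_right _ _ _
    _ = LinearMap.lTensor A (LinearMap.mulRight ℂ b)
          ((HA.Δ (c * a)).R (LinearMap.lTensor A (LinearMap.mulRight ℂ d) v)) := by
        rw [HA.T4_spec]
    _ = LinearMap.lTensor A (LinearMap.mulRight ℂ b)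
          ((HA.Δ a).R ((HA.Δ c).R (LinearMap.lTensor A (LinearMap.mulRight ℂ d) v))) := by
        rw [HA.Δ_mul]; rfl
    _ = tmulMul A ((HA.Δ c).R (LinearMap.lTensor A (LinearMap.mulRight ℂ d) v)) (HA.T1 a b) :=
        (key2 HA a b _).symm
    _ = tmulMul A (tmulMul A v (HA.T4 d c)) (HA.T1 a b) := by rw [HA.T4_spec]
    _ = tmulMul A v (tmulMul A (HA.T4 d c) (HA.T1 a b)) := tmulMul_assoc _ _ _

end TmulMulAux

end AuxFaithful


noncomputable section PairAux

variable {A B : Type*} [NonUnitalRing A] [Module ℂ A] [SMulCommClass ℂ A A]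
  [IsScalarTower ℂ A A] [NonUnitalRing B] [Module ℂ B] [SMulCommClass ℂ B B]
  [IsScalarTower ℂ B B]
variable {HA : RegMultHopf (A := A)} {HB : RegMultHopf (A := B)}

/-- `Ψ_{c,x}(p ⊗ q) = rA c (lA p x) * q`. -/
def PsiMap (P : MHAPairing HA HB) (c : A) (x : B) : A ⊗[ℂ] A →ₗ[ℂ] A :=
  TensorProduct.lift (LinearMap.mk₂ ℂ (fun p q => P.rA c (P.lA p x) * q)
    (fun p p' q => by simp [add_mul])
    (fun r p q => by simp [smul_mul_assoc])
    (fun p q q' => by simp [mul_add])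
    (fun r p q => by simp [mul_smul_comm]))

@[simp] lemma PsiMap_tmul (P : MHAPairing HA HB) (c : A) (x : B) (p q : A) :
    PsiMap P c x (p ⊗ₜ[ℂ] q) = P.rA c (P.lA p x) * q := rfl

/-- The module-algebra property of the action `lA`, in covered form. -/
lemma star_compat (P : MHAPairing HA HB) (a b : A) (x z : B) :
    P.lA a (x * P.lA b z)
      = TensorProduct.lift (actPair (LinearMap.mul ℂ B) P.lA x z) (HA.T1 a b) := by
  have hflip : ∀ p : A, P.β.flip (P.lA p x) = (P.β.flip x) ∘ₗ (LinearMap.mulRight ℂ p) := by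
    intro p
    apply LinearMap.ext
    intro e
    simp [P.dual4]
  have hΨ : ∀ c : A, P.rA (c * a) x * b = PsiMap P c x (HA.T1 a b) := by
    intro c
    have hd : ∀ (d : A) (u : A ⊗[ℂ] A),
        d * PsiMap P c x u = sliceL (P.β.flip x) (tmulMul A (HA.T4 d c) u) := by
      intro d
      have h : (LinearMap.mulLeft ℂ d) ∘ₗ (PsiMap P c x)
          = (sliceL (P.β.flip x)) ∘ₗ (tmulMul A (HA.T4 d c)) := by
        apply TensorProduct.ext'
        intro p q
        simp only [LinearMap.comp_apply, LinearMap.mulLeft_apply, PsiMap_tmul]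
        rw [tmulMul_tmul_right, sliceL_lTensor', ← mul_assoc,
          ← P.rA_leg (P.lA p x) c d, hflip p, ← sliceL_rTensor']
        simp
      intro u
      exact LinearMap.congr_fun h u
    have hD : ∀ d : A, d * (P.rA (c * a) x * b) = d * PsiMap P c x (HA.T1 a b) := by
      intro d
      rw [hd d, ← key HA a b c d, ← mul_assoc, ← P.rA_leg x (c * a) d, sliceL_lTensor']
      simp
    have h0 := HA.nondegR (P.rA (c * a) x * b - PsiMap P c x (HA.T1 a b))
      (fun d => by rw [mul_sub, hD d, sub_self])
    exact sub_eq_zero.mp h0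
  have hb : ∀ c : A,
      P.β c (P.lA a (x * P.lA b z))
        = P.β c (TensorProduct.lift (actPair (LinearMap.mul ℂ B) P.lA x z) (HA.T1 a b)) := by
    intro c
    have h1 : P.β c (P.lA a (x * P.lA b z)) = P.β (P.rA (c * a) x * b) z := by
      rw [← P.dual4 a c, P.dual1, ← P.dual4 b]
    have h2 : ∀ u : A ⊗[ℂ] A,
        P.β c (TensorProduct.lift (actPair (LinearMap.mul ℂ B) P.lA x z) u)
          = P.β (PsiMap P c x u) z := by
      have h : (P.β c) ∘ₗ (TensorProduct.lift (actPair (LinearMap.mul ℂ B) P.lA x z))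
          = (P.β.flip z) ∘ₗ (PsiMap P c x) := by
        apply TensorProduct.ext'
        intro p q
        simp only [LinearMap.comp_apply, TensorProduct.lift.tmul, actPair,
          LinearMap.mk₂_apply, LinearMap.flip_apply, PsiMap_tmul, LinearMap.mul_apply']
        rw [P.dual1, ← P.dual4 q]
      intro u
      exact LinearMap.congr_fun h u
    rw [h1, h2, hΨ c]
  have h0 := P.nondegB
    (P.lA a (x * P.lA b z)
      - TensorProduct.lift (actPair (LinearMap.mul ℂ B) P.lA x z) (HA.T1 a b))
    (fun c => by rw [map_sub, hb c, sub_self])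
  exact sub_eq_zero.mp h0

/-- `Θ_c(b ⊗ a) = rA c b * a`. -/
def ThetaMap (P : MHAPairing HA HB) (c : A) : B ⊗[ℂ] A →ₗ[ℂ] A :=
  TensorProduct.lift (LinearMap.mk₂ ℂ (fun b a => P.rA c b * a)
    (fun b b' a => by simp [add_mul])
    (fun r b a => by simp [smul_mul_assoc])
    (fun b a a' => by simp [mul_add])
    (fun r b a => by simp [mul_smul_comm]))

@[simp] lemma ThetaMap_tmul (P : MHAPairing HA HB) (c : A) (b : B) (a : A) :
    ThetaMap P c (b ⊗ₜ[ℂ] a) = P.rA c b * a := rfl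

/-- `G_{p,q}(b ⊗ a) = β p b • (q * a)`. -/
def GMap (P : MHAPairing HA HB) (p q : A) : B ⊗[ℂ] A →ₗ[ℂ] A :=
  TensorProduct.lift (LinearMap.mk₂ ℂ (fun b a => P.β p b • (q * a))
    (fun b b' a => by simp [add_smul])
    (fun r b a => by simp [smul_eq_mul, mul_smul])
    (fun b a a' => by simp [mul_add, smul_add])
    (fun r b a => by
      simp only [mul_smul_comm]
      rw [smul_comm]))

@[simp] lemma GMap_tmul (P : MHAPairing HA HB) (p q : A) (b : B) (a : A) :
    GMap P p q (b ⊗ₜ[ℂ] a) = P.β p b • (q * a) := rfl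

/-- `G` bundled as a bilinear map on `A ⊗ A`. -/
def GBig (P : MHAPairing HA HB) : A ⊗[ℂ] A →ₗ[ℂ] (B ⊗[ℂ] A) →ₗ[ℂ] A :=
  TensorProduct.lift (LinearMap.mk₂ ℂ (fun p q => GMap P p q)
    (fun p p' q => by
      apply TensorProduct.ext'
      intro b a
      simp [add_smul])
    (fun r p q => by
      apply TensorProduct.ext'
      intro b a
      simp [smul_smul])
    (fun p q q' => by
      apply TensorProduct.ext'
      intro b a
      simp [add_mul, smul_add])
    (fun r p q => by
      apply TensorProduct.ext'
      intro b a
      simp only [GMap_tmul, LinearMap.smul_apply, smul_mul_assoc]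
      rw [smul_comm]))

@[simp] lemma GBig_tmul (P : MHAPairing HA HB) (p q : A) (w : B ⊗[ℂ] A) :
    GBig P (p ⊗ₜ[ℂ] q) w = GMap P p q w := rfl

/-- The action map `ρ` of the smash product on `B`. -/
def smashRho (P : MHAPairing HA HB) : (B ⊗[ℂ] A) →ₗ[ℂ] B →ₗ[ℂ] B :=
  TensorProduct.lift (LinearMap.mk₂ ℂ
    (fun b a => (LinearMap.mulLeft ℂ b) ∘ₗ P.lA a)
    (fun b b' a => by apply LinearMap.ext; intro y; simp [add_mul])
    (fun r b a => by apply LinearMap.ext; intro y; simp [smul_mul_assoc])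
    (fun b a a' => by apply LinearMap.ext; intro y; simp [mul_add])
    (fun r b a => by apply LinearMap.ext; intro y; simp [mul_smul_comm]))

@[simp] lemma smashRho_tmul (P : MHAPairing HA HB) (b : B) (a : A) (b' : B) :
    smashRho P (b ⊗ₜ[ℂ] a) b' = b * P.lA a b' := rfl

end PairAux

/-! ## STATEMENT 12 -/

noncomputable section

/-- **Proposition 6.2.** For a pairing `(A, B)` of regular multiplier Hopf
algebras, `B` is a left `(B # A)`-module via `(b # a)b' = b(a ▷ b')`, and
this action is faithful. -/
theorem smash_action_on_B_faithful
    {A B : Type*} [NonUnitalRing A] [Module ℂ A] [SMulCommClass ℂ A A]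
    [IsScalarTower ℂ A A] [NonUnitalRing B] [Module ℂ B] [SMulCommClass ℂ B B]
    [IsScalarTower ℂ B B]
    (HA : RegMultHopf (A := A)) (HB : RegMultHopf (A := B))
    (P : MHAPairing HA HB)
    (μ : (B ⊗[ℂ] A) →ₗ[ℂ] (B ⊗[ℂ] A) →ₗ[ℂ] (B ⊗[ℂ] A))
    (hμ : IsSmashMul HA (LinearMap.mul ℂ B) P.lA μ) :
    ∃ ρ : (B ⊗[ℂ] A) →ₗ[ℂ] B →ₗ[ℂ] B,
      (∀ (b : B) (a : A) (b' : B), ρ (b ⊗ₜ[ℂ] a) b' = b * P.lA a b') ∧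
      (∀ (u v : B ⊗[ℂ] A) (b' : B), ρ (μ u v) b' = ρ u (ρ v b')) ∧
      ∀ z : B ⊗[ℂ] A, (∀ b' : B, ρ z b' = 0) → z = 0 := by
  refine ⟨smashRho P, fun b a b' => rfl, ?_, ?_⟩
  · -- homomorphism property
    intro u v b'
    induction u using TensorProduct.induction_on with
    | zero => simp
    | add x y hx hy => simp [map_add, LinearMap.add_apply, hx, hy]
    | tmul x a =>
      induction v using TensorProduct.induction_on with
      | zero => simp
      | add x' y' hx' hy' => simp [map_add, LinearMap.add_apply, hx', hy']
      | tmul x' a' =>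
        rw [hμ x x' a a']
        have h3 : ∀ w : A ⊗[ℂ] A,
            smashRho P (TensorProduct.lift (smashPair (LinearMap.mul ℂ B) P.lA x x') w) b'
              = x * TensorProduct.lift (actPair (LinearMap.mul ℂ B) P.lA x' b') w := by
          intro w
          induction w using TensorProduct.induction_on with
          | zero => simp
          | add s t hs ht => simp [map_add, LinearMap.add_apply, hs, ht, mul_add]
          | tmul p q =>
            simp only [TensorProduct.lift.tmul, smashPair, actPair, LinearMap.mk₂_apply,
              smashRho_tmul, LinearMap.mul_apply']
            rw [mul_assoc]
        rw [h3 (HA.T1 a a'), smashRho_tmul, smashRho_tmul, star_compat P a a' x' b']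
  · -- faithfulness
    intro z hz
    have hTheta : ∀ c : A, ThetaMap P c z = 0 := by
      intro c
      apply P.nondegA
      intro b'
      have hcl : ∀ w : B ⊗[ℂ] A, P.β (ThetaMap P c w) b' = P.β c (smashRho P w b') := by
        intro w
        induction w using TensorProduct.induction_on with
        | zero => simp
        | add s t hs ht => simp [map_add, LinearMap.add_apply, hs, ht]
        | tmul b a =>
          rw [ThetaMap_tmul, smashRho_tmul, P.dual4 a (P.rA c b) b', ← P.dual1]
      rw [hcl z, hz b', map_zero]
    have hG : ∀ u : A ⊗[ℂ] A, GBig P u z = 0 := by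
      have h1 : ∀ (d c : A) (w : B ⊗[ℂ] A),
          GBig P (HA.T4 d c) w = d * ThetaMap P c w := by
        intro d c w
        induction w using TensorProduct.induction_on with
        | zero => simp
        | add s t hs ht => simp [map_add, hs, ht, mul_add]
        | tmul b a =>
          have hu : ∀ u : A ⊗[ℂ] A,
              GBig P u (b ⊗ₜ[ℂ] a) = sliceL (P.β.flip b) u * a := by
            intro u
            induction u using TensorProduct.induction_on with
            | zero => simp
            | add s t hs ht => simp [map_add, LinearMap.add_apply, hs, ht, add_mul]
            | tmul p q => simp [smul_mul_assoc]
          rw [hu (HA.T4 d c), P.rA_leg b c d, ThetaMap_tmul, mul_assoc]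
      intro u
      obtain ⟨w, rfl⟩ := HA.T4_bij.2 u
      induction w using TensorProduct.induction_on with
      | zero => simp
      | add s t hs ht => simp [map_add, LinearMap.add_apply, hs, ht]
      | tmul d c =>
        rw [TensorProduct.lift.tmul]
        rw [h1 d c z, hTheta c, mul_zero]
    have hsl : ∀ p : A, sliceL (P.β p) z = 0 := by
      intro p
      apply HA.nondegR
      intro q
      have hq : ∀ w : B ⊗[ℂ] A, GBig P (p ⊗ₜ[ℂ] q) w = q * sliceL (P.β p) w := by
        intro w
        induction w using TensorProduct.induction_on with
        | zero => simp
        | add s t hs ht => simp [map_add, hs, ht, mul_add]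
        | tmul b a => simp [mul_smul_comm]
      rw [← hq z, hG]
    have hsr : ∀ φ : A →ₗ[ℂ] ℂ, sliceR φ z = 0 := by
      intro φ
      apply P.nondegB
      intro p
      have hp : ∀ w : B ⊗[ℂ] A, P.β p (sliceR φ w) = φ (sliceL (P.β p) w) := by
        intro w
        induction w using TensorProduct.induction_on with
        | zero => simp
        | add s t hs ht => simp [map_add, hs, ht]
        | tmul b a => simp [smul_eq_mul, mul_comm]
      rw [hp z, hsl p, map_zero]
    exact sliceR_all_zero hsr

end
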